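/- arXiv:math/9802032 — 3 statements merged into one kernel-verified Lean document; each statement's English description precedes it below -/
import Mathlib

section
/- Let n ≥ 2, let r be an odd prime, let ζ = exp(2πi/r), let b be an integer not divisible by r, and let b* be an integer with b·b* ≡ 1 (mod r). Then for every m ∈ ℤ^{n−1}, ∑_{k ∈ {0,…,r−1}^{n−1}} ζ^{b·(kᵗAk/2 + ∑_i k_i) + ∑_i m_i + kᵗAm} = ζ^{c} · G(b), where c is any integer with c ≡ −b*·(mᵗAm)/2 (mod r). (This is the 'completing the square' identity: the extra linear character ζ^{(μ|β)}, for β = ∑ m_iα_i in the root lattice, only multiplies the Gauss sum by ζ^{(−|β|²/2b)∨}.) -/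
open scoped BigOperators

/-- `ζ = exp(2πi/r)`. -/
noncomputable def zetaC (r : ℕ) : ℂ := Complex.exp (2 * Real.pi * Complex.I / r)

/-- The `(n-1)×(n-1)` Cartan matrix of `sl_n`. -/
def cartan (n : ℕ) : Matrix (Fin (n - 1)) (Fin (n - 1)) ℤ :=
  Matrix.of fun i j =>
    if (i : ℕ) = (j : ℕ) then 2
    else if (i : ℕ) + 1 = (j : ℕ) ∨ (j : ℕ) + 1 = (i : ℕ) then -1 else 0

/-- The quadratic form `kᵗAk` attached to the Cartan matrix of `sl_n`. -/
def qf (n : ℕ) (k : Fin (n - 1) → ℤ) : ℤ := ∑ i, ∑ j, k i * cartan n i j * k j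

/-- The Gauss sum on the root lattice of `sl_n`:
`G(b) = ∑_{k ∈ {0,…,r−1}^{n−1}} ζ^{b(kᵗAk/2 + ∑ k_i)}`. -/
noncomputable def gaussG (n r : ℕ) (b : ℤ) : ℂ :=
  ∑ k : Fin (n - 1) → Fin r,
    zetaC r ^ (b * (qf n (fun i => ((k i : ℕ) : ℤ)) / 2 + ∑ i, ((k i : ℕ) : ℤ)))

/-! ### Auxiliary lemmas -/

def bf (n : ℕ) (u w : Fin (n - 1) → ℤ) : ℤ := ∑ i, ∑ j, u i * cartan n i j * w j

lemma cartan_symm (n : ℕ) (i j : Fin (n-1)) : cartan n i j = cartan n j i := by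
  unfold cartan
  simp only [Matrix.of_apply]
  split_ifs <;> omega

lemma qf_even (n : ℕ) (x : Fin (n-1) → ℤ) : 2 ∣ qf n x := by
  have h : ((qf n x : ℤ) : ZMod 2) = 0 := by
    unfold qf
    push_cast
    rw [← Finset.sum_product']
    apply Finset.sum_involution (fun p _ => (p.2, p.1))
    · intro p _
      have hA : (cartan n p.1 p.2 : ZMod 2) = (cartan n p.2 p.1 : ZMod 2) := by
        rw [cartan_symm]
      have h2 : (2 : ZMod 2) = 0 := rfl
      calc (x p.1 : ZMod 2) * (cartan n p.1 p.2 : ZMod 2) * (x p.2) +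
            (x p.2 : ZMod 2) * (cartan n p.2 p.1 : ZMod 2) * (x p.1)
          = (x p.1 : ZMod 2) * (cartan n p.1 p.2 : ZMod 2) * (x p.2) * 2 := by rw [hA]; ring
        _ = 0 := by rw [h2, mul_zero]
    · intro p _ hf hgp
      apply hf
      have h1 : p.2 = p.1 := congrArg Prod.fst hgp
      have hd : cartan n p.1 p.2 = 2 := by
        unfold cartan
        simp only [Matrix.of_apply]
        rw [if_pos (congrArg Fin.val h1.symm)]
      rw [hd]
      push_cast
      have h2 : (2 : ZMod 2) = 0 := rfl
      rw [h2]; ring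
    · intro p _; exact Finset.mem_univ _
    · intro p _; rfl
  exact_mod_cast (ZMod.intCast_zmod_eq_zero_iff_dvd _ 2).mp h

lemma bf_symm (n : ℕ) (u w : Fin (n-1) → ℤ) : bf n w u = bf n u w := by
  unfold bf
  rw [Finset.sum_comm]
  refine Finset.sum_congr rfl fun i _ => Finset.sum_congr rfl fun j _ => ?_
  rw [cartan_symm]; ring

lemma qf_add (n : ℕ) (u w : Fin (n-1) → ℤ) :
    qf n (fun i => u i + w i) = qf n u + 2 * bf n u w + qf n w := by
  have hs := bf_symm n u w
  unfold qf bf at *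
  simp only [add_mul, mul_add, Finset.sum_add_distrib]
  linarith

lemma bf_smul_right (n : ℕ) (t : ℤ) (u m : Fin (n-1) → ℤ) :
    bf n u (fun i => t * m i) = t * bf n u m := by
  unfold bf
  rw [Finset.mul_sum]
  refine Finset.sum_congr rfl fun i _ => ?_
  rw [Finset.mul_sum]
  refine Finset.sum_congr rfl fun j _ => by ring

lemma qf_smul (n : ℕ) (t : ℤ) (m : Fin (n-1) → ℤ) :
    qf n (fun i => t * m i) = t^2 * qf n m := by
  unfold qf
  rw [Finset.mul_sum]
  refine Finset.sum_congr rfl fun i _ => ?_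
  rw [Finset.mul_sum]
  refine Finset.sum_congr rfl fun j _ => by ring

lemma zetaC_ne_zero (r : ℕ) : zetaC r ≠ 0 := Complex.exp_ne_zero _

lemma zetaC_pow_r (r : ℕ) (hr : r ≠ 0) : zetaC r ^ (r : ℤ) = 1 := by
  unfold zetaC
  rw [← Complex.exp_int_mul]
  have hrC : (r : ℂ) ≠ 0 := Nat.cast_ne_zero.mpr hr
  have : ((r : ℤ) : ℂ) * (2 * Real.pi * Complex.I / r) = 2 * Real.pi * Complex.I := by
    push_cast
    field_simp
  rw [this, Complex.exp_two_pi_mul_I]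

lemma zetaC_zpow_congr (r : ℕ) (hr : r ≠ 0) {a b : ℤ} (h : a ≡ b [ZMOD (r : ℤ)]) :
    zetaC r ^ a = zetaC r ^ b := by
  obtain ⟨t, ht⟩ := Int.modEq_iff_dvd.mp h
  have hb : b = a + r * t := by linarith
  rw [hb, zpow_add₀ (zetaC_ne_zero r), zpow_mul, zetaC_pow_r r hr, one_zpow, mul_one]

/-- the key exponent congruence -/
lemma key_congr (n r : ℕ) (hr : r.Prime) (hodd : Odd r)
    (b bs : ℤ) (hbs : Int.ModEq (r : ℤ) (b * bs) 1)
    (m : Fin (n - 1) → ℤ) (c : ℤ)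
    (hc : Int.ModEq (r : ℤ) c (-bs * (qf n m / 2)))
    (u v : Fin (n-1) → ℤ) (hvw : ∀ i, v i ≡ u i + bs * m i [ZMOD (r:ℤ)]) :
    b * (qf n u / 2 + ∑ i, u i) + ∑ i, m i + bf n u m ≡
      c + b * (qf n v / 2 + ∑ i, v i) [ZMOD (r:ℤ)] := by
  set w : Fin (n-1) → ℤ := fun i => u i + bs * m i with hw
  have heu := qf_even n u
  have hev := qf_even n v
  have hem := qf_even n m
  have h2m : 2 * (qf n m / 2) = qf n m := Int.mul_ediv_cancel' hem
  obtain ⟨q, hq⟩ := hem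
  obtain ⟨t, ht'⟩ := Int.modEq_iff_dvd.mp hbs
  have ht : b * bs = 1 + r * (-t) := by linarith
  have h2u : 2 * (qf n u / 2) = qf n u := Int.mul_ediv_cancel' heu
  have h2v : 2 * (qf n v / 2) = qf n v := Int.mul_ediv_cancel' hev
  -- reduce to the doubled congruence mod 2r
  have hr2 : ¬ (2:ℤ) ∣ (r:ℤ) := by
    rw [Int.two_dvd_ne_zero]
    obtain ⟨s, hs⟩ := hodd
    omega
  have hew : 2 ∣ qf n w := qf_even n w
  -- expansion of qf w and ∑ w
  have hwq : qf n w = qf n u + 2 * (bs * bf n u m) + bs^2 * qf n m := by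
    have h := qf_add n u (fun i => bs * m i)
    rw [bf_smul_right, qf_smul] at h
    exact h
  have hws : ∑ i, w i = ∑ i, u i + bs * ∑ i, m i := by
    simp [hw, Finset.sum_add_distrib, Finset.mul_sum]
  -- mod r facts via ZMod r
  have hvwZ : ∀ i, ((v i : ZMod r)) = ((w i : ZMod r)) := fun i =>
    (ZMod.intCast_eq_intCast_iff _ _ _).mpr (hvw i)
  have hqvw_r : qf n v ≡ qf n w [ZMOD (r:ℤ)] := by
    rw [← ZMod.intCast_eq_intCast_iff]
    unfold qf
    push_cast
    exact Finset.sum_congr rfl fun i _ => Finset.sum_congr rfl fun j _ => by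
      rw [hvwZ i, hvwZ j]
  have hsvw_r : (∑ i, v i) ≡ (∑ i, w i) [ZMOD (r:ℤ)] := by
    rw [← ZMod.intCast_eq_intCast_iff]
    push_cast
    exact Finset.sum_congr rfl fun i _ => hvwZ i
  -- (A) qf v ≡ qf w mod 2r
  have hA : qf n v ≡ qf n w [ZMOD (2 * r : ℤ)] := by
    obtain ⟨s, hs1⟩ := Int.modEq_iff_dvd.mp hqvw_r
    have hd2 : (2:ℤ) ∣ qf n w - qf n v := dvd_sub hew hev
    have h2s : (2:ℤ) ∣ s := by
      rcases (Int.prime_two.dvd_mul.mp (hs1 ▸ hd2)) with h | h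
      · exact absurd h hr2
      · exact h
    obtain ⟨s2, hs2⟩ := h2s
    exact Int.modEq_iff_dvd.mpr ⟨s2, by rw [hs1, hs2]; ring⟩
  -- (B) 2b ∑v ≡ 2b ∑w mod 2r
  have hB : 2 * b * (∑ i, v i) ≡ 2 * b * (∑ i, w i) [ZMOD (2 * r : ℤ)] := by
    obtain ⟨s, hs⟩ := Int.modEq_iff_dvd.mp hsvw_r
    exact Int.modEq_iff_dvd.mpr ⟨b * s, by linear_combination 2 * b * hs⟩
  -- (C) 2c ≡ -bs * qf m mod 2r
  have hC : 2 * c ≡ -bs * qf n m [ZMOD (2 * r : ℤ)] := by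
    obtain ⟨s, hs⟩ := Int.modEq_iff_dvd.mp hc
    exact Int.modEq_iff_dvd.mpr ⟨s, by linear_combination 2 * hs + bs * h2m⟩
  -- (D) completing the square mod 2r
  have hD : b * qf n u + 2 * b * (∑ i, u i) + 2 * (∑ i, m i) + 2 * bf n u m ≡
      -bs * qf n m + b * qf n w + 2 * b * (∑ i, w i) [ZMOD (2 * r : ℤ)] := by
    refine Int.modEq_iff_dvd.mpr ⟨-t * (bf n u m + bs * q + ∑ i, m i), ?_⟩
    rw [hwq, hws]
    linear_combination (2 * bf n u m + bs * qf n m + 2 * (∑ i, m i)) * ht +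
      ((r:ℤ) * (-t) * bs) * hq
  -- assemble the doubled congruence
  have main2 : 2 * (b * (qf n u / 2 + ∑ i, u i) + ∑ i, m i + bf n u m) ≡
      2 * (c + b * (qf n v / 2 + ∑ i, v i)) [ZMOD (2 * r : ℤ)] := by
    calc 2 * (b * (qf n u / 2 + ∑ i, u i) + ∑ i, m i + bf n u m)
        = b * qf n u + 2 * b * (∑ i, u i) + 2 * (∑ i, m i) + 2 * bf n u m := by
          linear_combination b * h2u
      _ ≡ -bs * qf n m + b * qf n w + 2 * b * (∑ i, w i) [ZMOD (2 * r : ℤ)] := hD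
      _ ≡ 2 * c + b * qf n v + 2 * b * (∑ i, v i) [ZMOD (2 * r : ℤ)] :=
          ((hC.symm).add ((hA.symm).mul_left b)).add hB.symm
      _ = 2 * (c + b * (qf n v / 2 + ∑ i, v i)) := by linear_combination -b * h2v
  -- halve
  obtain ⟨s, hs⟩ := Int.modEq_iff_dvd.mp main2
  exact Int.modEq_iff_dvd.mpr ⟨s, by linarith⟩

/-- Completing the square: the extra linear character only multiplies the Gauss sum
by `ζ^{(−|β|²/2b)∨}`. -/
theorem stmt5 (n r : ℕ) (hn : 2 ≤ n) (hr : r.Prime) (hodd : Odd r)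
    (b bs : ℤ) (hb : ¬ ((r : ℤ) ∣ b)) (hbs : Int.ModEq (r : ℤ) (b * bs) 1)
    (m : Fin (n - 1) → ℤ) (c : ℤ)
    (hc : Int.ModEq (r : ℤ) c (-bs * (qf n m / 2))) :
    ∑ k : Fin (n - 1) → Fin r,
        zetaC r ^ (b * (qf n (fun i => ((k i : ℕ) : ℤ)) / 2 + ∑ i, ((k i : ℕ) : ℤ)) +
          ∑ i, m i + ∑ i, ∑ j, ((k i : ℕ) : ℤ) * cartan n i j * m j) =
      zetaC r ^ c * gaussG n r b := by
  have hr0 : r ≠ 0 := hr.ne_zero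
  have hrpos : (0:ℤ) < (r:ℤ) := by exact_mod_cast hr.pos
  haveI : NeZero r := ⟨hr0⟩
  -- shift element
  set s : Fin (n-1) → Fin r := fun i =>
    ⟨((bs * m i) % (r:ℤ)).toNat, by
      have h1 : 0 ≤ (bs * m i) % (r:ℤ) := Int.emod_nonneg _ (by omega)
      have h2 : (bs * m i) % (r:ℤ) < (r:ℤ) := Int.emod_lt_of_pos _ hrpos
      omega⟩ with hs_def
  have hs_val : ∀ i, (((s i : Fin r) : ℕ) : ℤ) = (bs * m i) % (r:ℤ) := by
    intro i
    simp only [hs_def]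
    exact Int.toNat_of_nonneg (Int.emod_nonneg _ (by omega))
  let e : (Fin (n-1) → Fin r) ≃ (Fin (n-1) → Fin r) :=
    Equiv.piCongrRight fun i => Equiv.addRight (s i)
  rw [gaussG, Finset.mul_sum]
  refine Fintype.sum_equiv e _ _ fun k => ?_
  rw [← zpow_add₀ (zetaC_ne_zero r)]
  apply zetaC_zpow_congr r hr0
  have hvw : ∀ i, (((e k i : Fin r) : ℕ) : ℤ) ≡
      ((k i : ℕ) : ℤ) + bs * m i [ZMOD (r:ℤ)] := by
    intro i
    have he : e k i = k i + s i := rfl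
    rw [he, Fin.val_add]
    push_cast
    calc (((k i : ℕ) + (s i : ℕ)) % (r:ℕ) : ℤ)
        ≡ ((k i : ℕ) : ℤ) + ((s i : ℕ) : ℤ) [ZMOD (r:ℤ)] := by
          have : (((k i : ℕ) + (s i : ℕ) : ℕ) : ℤ) % (r:ℤ) ≡
              (((k i : ℕ) + (s i : ℕ) : ℕ) : ℤ) [ZMOD (r:ℤ)] :=
            Int.emod_emod_of_dvd _ dvd_rfl
          push_cast at this ⊢
          exact this
      _ ≡ ((k i : ℕ) : ℤ) + bs * m i [ZMOD (r:ℤ)] := by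
          rw [hs_val i]
          exact Int.ModEq.add_left _ (Int.emod_emod_of_dvd _ dvd_rfl)
  exact key_congr n r hr hodd b bs hbs m c hc
    (fun i => ((k i : ℕ) : ℤ)) (fun i => ((e k i : Fin r) : ℕ)) hvw
end

section
/- Let r be an odd prime and d a natural number with ⌊d/2⌋ ≤ (r−1)/2, and let ζ = exp(2πi/r). Then there exists c ∈ ℤ[1/(r−1)!][ζ] such that ∑_{k=0}^{r−1} C(k,d) = c · (ζ−1)^{(r−1)/2 − ⌊d/2⌋}. -/
open scoped BigOperators

theorem stmt10 (r : ℕ) (hr : r.Prime) (hodd : Odd r) (d : ℕ)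
    (hd : d / 2 ≤ (r - 1) / 2) :
    ∃ c ∈ Subring.closure ({zetaC r, (((r - 1).factorial : ℕ) : ℂ)⁻¹} : Set ℂ),
      (∑ k ∈ Finset.range r, (k.choose d : ℂ)) =
        c * (zetaC r - 1) ^ ((r - 1) / 2 - d / 2) := by
  have hr0 : r ≠ 0 := hr.ne_zero
  have hr1 : 1 ≤ r := hr.pos
  have hζ : IsPrimitiveRoot (zetaC r) r := Complex.isPrimitiveRoot_exp r hr0
  -- hockey stick
  have hnat : ∑ k ∈ Finset.range r, k.choose d = r.choose (d + 1) := by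
    have hsub : Finset.Icc d (r - 1) ⊆ Finset.range r := by
      intro x hx
      simp only [Finset.mem_Icc] at hx
      simp only [Finset.mem_range]
      omega
    rw [← Finset.sum_subset hsub (fun k hk hk' => by
      simp only [Finset.mem_range] at hk
      simp only [Finset.mem_Icc] at hk'
      exact Nat.choose_eq_zero_of_lt (by omega))]
    rw [Nat.sum_Icc_choose (r - 1) d]
    congr 1
    omega
  have hsum : (∑ k ∈ Finset.range r, (k.choose d : ℂ)) = (r.choose (d + 1) : ℂ) := by
    rw [← hnat]; push_cast; rfl
  set S : Subring ℂ := Subring.closure ({zetaC r, (((r - 1).factorial : ℕ) : ℂ)⁻¹} : Set ℂ)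
  have hζS : zetaC r ∈ S := Subring.subset_closure (Set.mem_insert _ _)
  rcases lt_trichotomy (d + 1) r with hlt | heq | hgt
  · -- r divides the binomial coefficient
    obtain ⟨t, ht⟩ := Nat.Prime.dvd_choose_self hr (Nat.succ_ne_zero d) hlt
    obtain ⟨z, hz, hzeq⟩ := hζ.self_sub_one_pow_dvd_order (Nat.sub_lt hr.pos one_pos)
    have hzS : z ∈ S := by
      rw [Algebra.adjoin_int] at hz
      exact Subring.closure_mono (Set.singleton_subset_iff.mpr (Set.mem_insert _ _)) hz
    set m := (r - 1) / 2 - d / 2 with hm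
    have hmle : m ≤ r - 1 := by omega
    refine ⟨(t : ℂ) * z * (zetaC r - 1) ^ (r - 1 - m), ?_, ?_⟩
    · exact Subring.mul_mem _ (Subring.mul_mem _ (natCast_mem S t) hzS)
        (Subring.pow_mem _ (Subring.sub_mem _ hζS (Subring.one_mem _)) _)
    · rw [hsum, ht]
      push_cast
      rw [hzeq]
      rw [mul_assoc, mul_assoc, ← pow_add]
      rw [Nat.sub_add_cancel hmle]
      ring
  · -- d + 1 = r : binomial is 1 and exponent is 0
    have hd' : d = r - 1 := by omega
    have hm : (r - 1) / 2 - d / 2 = 0 := by omega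
    refine ⟨1, Subring.one_mem _, ?_⟩
    rw [hsum, hm, ← heq, Nat.choose_self]
    simp
  · -- d + 1 > r : binomial is 0
    refine ⟨0, Subring.zero_mem _, ?_⟩
    rw [hsum, Nat.choose_eq_zero_of_lt hgt]
    simp
end

section
/- Let n ≥ 2, let a = (a_1,…,a_{n−1}) ∈ ℕ^{n−1}, let d ∈ ℕ with 2d < a_1 + ⋯ + a_{n−1}, and let b be a nonzero rational number. Then ∑_{s: 0 ≤ s_i ≤ a_i} (−1)^{s_1+⋯+s_{n−1}} · ∏_{i=1}^{n−1} C(a_i, s_i) · C( −(s−a)ᵗA(s−a)/(2b), d ) = 0, where C(y,d) := y(y−1)⋯(y−d+1)/d! for y ∈ ℚ. (This is the vanishing of the coefficient of x^d, for 2d < |a|, in the series ∑_{0≤s≤a}(−1)^{|s|}C(a,s)(1+x)^{−|∑(s_i−a_i)α_i|²/2b}, which gives the divisibility of Γ_b(η^a) by x^{⌊(n(n−1)+|a|+1)/2⌋}.) -/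
open scoped BigOperators

/-- The `(n-1)×(n-1)` Cartan matrix of `sl_n`, over `ℚ`. -/
def cartanQ (n : ℕ) : Matrix (Fin (n - 1)) (Fin (n - 1)) ℚ :=
  Matrix.of fun i j =>
    if (i : ℕ) = (j : ℕ) then 2
    else if (i : ℕ) + 1 = (j : ℕ) ∨ (j : ℕ) + 1 = (i : ℕ) then -1 else 0

/-- The quadratic form `vᵗAv` attached to the Cartan matrix of `sl_n`, over `ℚ`. -/
def qfQ (n : ℕ) (v : Fin (n - 1) → ℚ) : ℚ := ∑ i, ∑ j, v i * cartanQ n i j * v j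

/-- The generalized binomial coefficient `C(y,d) = y(y−1)⋯(y−d+1)/d!` of a rational. -/
def gbinomQ (y : ℚ) (d : ℕ) : ℚ :=
  (∏ t ∈ Finset.range d, (y - t)) / (d.factorial : ℚ)

-- Step 1: iterated forward difference of x^k vanishes when k < a
lemma fwd_pow_zero : ∀ k a : ℕ, k < a → (fwdDiff (1:ℕ))^[a] (fun x : ℕ => (x:ℚ)^k) = 0 := by
  intro k
  induction k using Nat.strong_induction_on with
  | _ k IH =>
    intro a hk
    obtain ⟨a', rfl⟩ : ∃ a', a = a' + 1 := ⟨a - 1, by omega⟩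
    rw [Function.iterate_succ_apply]
    have hstep : fwdDiff (1:ℕ) (fun x : ℕ => (x:ℚ)^k) =
        ∑ j ∈ Finset.range k, (k.choose j : ℚ) • (fun x : ℕ => (x:ℚ)^j) := by
      funext x
      simp only [fwdDiff, Finset.sum_apply, Pi.smul_apply, smul_eq_mul]
      push_cast
      rw [add_pow, Finset.sum_range_succ]
      simp [mul_comm]
    rw [hstep, fwdDiff_iter_finset_sum]
    refine Finset.sum_eq_zero fun j hj => ?_
    rw [fwdDiff_iter_const_smul, IH j (Finset.mem_range.mp hj) a'
      (by have := Finset.mem_range.mp hj; omega)]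
    simp

lemma alt_sum_pow_eq_zero (a k : ℕ) (hk : k < a) :
    ∑ s ∈ Finset.range (a+1), (-1:ℚ)^s * (a.choose s) * (s:ℚ)^k = 0 := by
  have h := fwdDiff_iter_eq_sum_shift (1:ℕ) (fun x : ℕ => (x:ℚ)^k) a 0
  rw [fwd_pow_zero k a hk] at h
  have h2 : (0:ℚ) = ∑ s ∈ Finset.range (a+1),
      ((-1:ℚ)^(a-s) * (a.choose s)) * (s:ℚ)^k := by
    simpa [zsmul_eq_mul] using h
  have h3 : ∑ s ∈ Finset.range (a+1), (-1:ℚ)^s * (a.choose s) * (s:ℚ)^k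
      = (-1:ℚ)^a * ∑ s ∈ Finset.range (a+1), ((-1:ℚ)^(a-s) * (a.choose s)) * (s:ℚ)^k := by
    rw [Finset.mul_sum]
    refine Finset.sum_congr rfl fun s hs => ?_
    have hsa : s ≤ a := by simpa [Nat.lt_succ_iff] using hs
    have hpow : (-1:ℚ)^s = (-1:ℚ)^a * (-1:ℚ)^(a-s) := by
      rw [← pow_add]
      have : a + (a - s) = 2*(a-s) + s := by omega
      rw [this, pow_add, pow_mul]
      norm_num
    rw [hpow]; ring
  rw [h3, ← h2, mul_zero]

-- Step 2: multivariate vanishing for polynomials of small total degree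
lemma mv_zero (m : ℕ) (a : Fin m → ℕ) (P : MvPolynomial (Fin m) ℚ)
    (hdeg : P.totalDegree < ∑ i, a i) :
    ∑ s ∈ Fintype.piFinset (fun i => Finset.range (a i + 1)),
      (-1:ℚ)^(∑ i, s i) * (∏ i, ((a i).choose (s i):ℚ)) *
        MvPolynomial.eval (fun i => ((s i : ℕ):ℚ)) P = 0 := by
  have key : ∀ v ∈ P.support,
      ∑ s ∈ Fintype.piFinset (fun i => Finset.range (a i + 1)),
        ∏ i, ((-1:ℚ)^(s i) * ((a i).choose (s i):ℚ) * ((s i : ℕ):ℚ)^(v i)) = 0 := by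
    intro v hv
    rw [← Finset.prod_univ_sum (fun i => Finset.range (a i + 1))
      (fun i x => (-1:ℚ)^x * ((a i).choose x : ℚ) * (x:ℚ)^(v i))]
    have hvd : ∑ i, v i ≤ P.totalDegree := by
      have := MvPolynomial.le_totalDegree hv
      rwa [Finsupp.sum_fintype _ _ (fun _ => rfl)] at this
    have : ∃ i0, v i0 < a i0 := by
      by_contra hc
      push_neg at hc
      have : ∑ i, a i ≤ ∑ i, v i := Finset.sum_le_sum fun i _ => hc i
      omega
    obtain ⟨i0, hi0⟩ := this
    exact Finset.prod_eq_zero (Finset.mem_univ i0) (alt_sum_pow_eq_zero _ _ hi0)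
  calc ∑ s ∈ Fintype.piFinset (fun i => Finset.range (a i + 1)),
      (-1:ℚ)^(∑ i, s i) * (∏ i, ((a i).choose (s i):ℚ)) *
        MvPolynomial.eval (fun i => ((s i : ℕ):ℚ)) P
      = ∑ s ∈ Fintype.piFinset (fun i => Finset.range (a i + 1)),
          ∑ v ∈ P.support, MvPolynomial.coeff v P *
            ∏ i, ((-1:ℚ)^(s i) * ((a i).choose (s i):ℚ) * ((s i : ℕ):ℚ)^(v i)) := by
        refine Finset.sum_congr rfl fun s _ => ?_
        rw [MvPolynomial.eval_eq', Finset.mul_sum]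
        refine Finset.sum_congr rfl fun v _ => ?_
        rw [Finset.prod_mul_distrib, Finset.prod_mul_distrib,
          Finset.prod_pow_eq_pow_sum]
        ring
    _ = ∑ v ∈ P.support, MvPolynomial.coeff v P *
          ∑ s ∈ Fintype.piFinset (fun i => Finset.range (a i + 1)),
            ∏ i, ((-1:ℚ)^(s i) * ((a i).choose (s i):ℚ) * ((s i : ℕ):ℚ)^(v i)) := by
        rw [Finset.sum_comm]
        exact Finset.sum_congr rfl fun v _ => (Finset.mul_sum _ _ _).symm
    _ = 0 := Finset.sum_eq_zero fun v hv => by rw [key v hv, mul_zero]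

theorem stmt18 (n : ℕ) (hn : 2 ≤ n) (a : Fin (n - 1) → ℕ) (d : ℕ)
    (hd : 2 * d < ∑ i, a i) (b : ℚ) (hb : b ≠ 0) :
    ∑ s ∈ Fintype.piFinset (fun i => Finset.range (a i + 1)),
      (-1 : ℚ) ^ (∑ i, s i) * (∏ i, ((a i).choose (s i) : ℚ)) *
        gbinomQ (-(qfQ n (fun i => ((s i : ℕ) : ℚ) - ((a i : ℕ) : ℚ))) / (2 * b)) d =
      0 := by
  classical
  set Q : MvPolynomial (Fin (n - 1)) ℚ :=
    ∑ i, ∑ j, (MvPolynomial.X i - MvPolynomial.C ((a i : ℚ))) *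
      MvPolynomial.C (cartanQ n i j) *
      (MvPolynomial.X j - MvPolynomial.C ((a j : ℚ))) with hQdef
  set P : MvPolynomial (Fin (n - 1)) ℚ :=
    MvPolynomial.C ((d.factorial : ℚ)⁻¹) *
      ∏ t ∈ Finset.range d,
        (MvPolynomial.C (-(2 * b)⁻¹) * Q - MvPolynomial.C ((t : ℚ))) with hPdef
  have hQeval : ∀ s : Fin (n - 1) → ℕ,
      MvPolynomial.eval (fun i => ((s i : ℕ) : ℚ)) Q =
        qfQ n (fun i => ((s i : ℕ) : ℚ) - ((a i : ℕ) : ℚ)) := by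
    intro s
    simp [hQdef, qfQ, map_sum]
  have heval : ∀ s : Fin (n - 1) → ℕ,
      MvPolynomial.eval (fun i => ((s i : ℕ) : ℚ)) P =
        gbinomQ (-(qfQ n (fun i => ((s i : ℕ) : ℚ) - ((a i : ℕ) : ℚ))) / (2 * b)) d := by
    intro s
    rw [hPdef, map_mul, map_prod, MvPolynomial.eval_C, gbinomQ]
    rw [div_eq_mul_inv, mul_comm]
    congr 1
    refine Finset.prod_congr rfl fun t _ => ?_
    rw [map_sub, map_mul, MvPolynomial.eval_C, MvPolynomial.eval_C, hQeval s]
    rw [div_eq_mul_inv]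
    ring
  have hQdeg : Q.totalDegree ≤ 2 := by
    refine (MvPolynomial.totalDegree_finset_sum _ _).trans (Finset.sup_le fun i _ => ?_)
    refine (MvPolynomial.totalDegree_finset_sum _ _).trans (Finset.sup_le fun j _ => ?_)
    have h1 : ∀ i : Fin (n - 1),
        (MvPolynomial.X i - MvPolynomial.C ((a i : ℚ)) :
          MvPolynomial (Fin (n - 1)) ℚ).totalDegree ≤ 1 := by
      intro i
      refine (MvPolynomial.totalDegree_sub _ _).trans (max_le ?_ ?_)
      · exact le_of_eq (MvPolynomial.totalDegree_X _)
      · exact le_trans (le_of_eq (MvPolynomial.totalDegree_C _)) (by norm_num)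
    calc ((MvPolynomial.X i - MvPolynomial.C ((a i : ℚ))) *
            MvPolynomial.C (cartanQ n i j) *
            (MvPolynomial.X j - MvPolynomial.C ((a j : ℚ)))).totalDegree
        ≤ ((MvPolynomial.X i - MvPolynomial.C ((a i : ℚ))) *
            MvPolynomial.C (cartanQ n i j)).totalDegree +
          (MvPolynomial.X j - MvPolynomial.C ((a j : ℚ))).totalDegree :=
          MvPolynomial.totalDegree_mul _ _
      _ ≤ 1 + 1 :=
          add_le_add ((MvPolynomial.totalDegree_mul _ _).trans
            (by rw [MvPolynomial.totalDegree_C, add_zero]; exact h1 i)) (h1 j)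
      _ = 2 := by norm_num
  have hPdeg : P.totalDegree ≤ 2 * d := by
    rw [hPdef]
    refine (MvPolynomial.totalDegree_mul _ _).trans ?_
    rw [MvPolynomial.totalDegree_C, zero_add]
    refine (MvPolynomial.totalDegree_finset_prod _ _).trans ?_
    calc ∑ t ∈ Finset.range d,
          (MvPolynomial.C (-(2 * b)⁻¹) * Q - MvPolynomial.C ((t : ℚ))).totalDegree
        ≤ ∑ _t ∈ Finset.range d, 2 := by
          refine Finset.sum_le_sum fun t _ => ?_
          refine (MvPolynomial.totalDegree_sub _ _).trans (max_le ?_ ?_)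
          · refine (MvPolynomial.totalDegree_mul _ _).trans ?_
            rw [MvPolynomial.totalDegree_C, zero_add]
            exact hQdeg
          · exact le_trans (le_of_eq (MvPolynomial.totalDegree_C _)) (by norm_num)
      _ = 2 * d := by simp [mul_comm]
  calc ∑ s ∈ Fintype.piFinset (fun i => Finset.range (a i + 1)),
        (-1 : ℚ) ^ (∑ i, s i) * (∏ i, ((a i).choose (s i) : ℚ)) *
          gbinomQ (-(qfQ n (fun i => ((s i : ℕ) : ℚ) - ((a i : ℕ) : ℚ))) / (2 * b)) d
      = ∑ s ∈ Fintype.piFinset (fun i => Finset.range (a i + 1)),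
          (-1 : ℚ) ^ (∑ i, s i) * (∏ i, ((a i).choose (s i) : ℚ)) *
            MvPolynomial.eval (fun i => ((s i : ℕ) : ℚ)) P :=
        Finset.sum_congr rfl fun s _ => by rw [heval s]
    _ = 0 := mv_zero (n - 1) a P (lt_of_le_of_lt hPdeg hd)
end
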